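/- In the max-capacity counterexample with 2n+1 containers, where n containers have (load, capacity) = (ε, M) and n+1 containers have (load, capacity) = (M - 2ε, M - ε), with ε > 0 small and M > 2(n+1)ε: (a) attacking any single container of the second type triggers a cascade that fails all 2n+1 containers, while (b) attacking all n containers of the first type (the max-capacity containers) triggers no further failures, i.e., the alive count after attacking those n containers is n+1. -/

import Mathlib

/-!
Attacking a container of the second type sheds its load `M - 2ε` onto the `2n` survivors;
this exceeds the free space `ε` of every other second-type container, and once all `n + 1` of
them have failed, their load `(n + 1)(M - 2ε)` spread over the `n` survivors exceeds `M - ε`, so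
everything fails. Attacking the `n` first-type containers instead sheds only `nε` onto `n + 1`
survivors, less than the smallest free space `ε`, so the cascade stops at once.
-/

open Finset
open scoped Classical

/-- One step of the equal load redistribution cascade: every alive line whose
free space is at most the total failed load divided by the number of alive lines fails. -/
noncomputable def step {N : ℕ} (L S : Fin N → ℝ) (F : Finset (Fin N)) : Finset (Fin N) :=
  F ∪ Finset.univ.filter (fun i => S i ≤ (∑ j ∈ F, L j) / ((N : ℝ) - F.card))

/-- The steady state (final failed set) of the cascade initiated by attack set `A`. -/
noncomputable def cascade {N : ℕ} (L S : Fin N → ℝ) (A : Finset (Fin N)) : Finset (Fin N) :=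
  (step L S)^[N] A

section Cascade

variable {N : ℕ} (L S : Fin N → ℝ)

noncomputable def extraLoad (F : Finset (Fin N)) : ℝ :=
  (∑ j ∈ F, L j) / ((N : ℝ) - #F)

variable {L S}

theorem mem_step {F : Finset (Fin N)} {i : Fin N} :
    i ∈ step L S F ↔ i ∈ F ∨ S i ≤ extraLoad L F := by
  simp [step, extraLoad]

theorem step_univ : step L S univ = univ :=
  eq_univ_of_forall fun _ => mem_step.2 (Or.inl (mem_univ _))

theorem cascade_eq_of_step_iterate_fixed {A : Finset (Fin N)} {k : ℕ} (hk : k ≤ N)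
    (hfix : step L S ((step L S)^[k] A) = (step L S)^[k] A) :
    cascade L S A = (step L S)^[k] A := by
  rw [cascade, ← Function.iterate_fixed hfix (N - k), ← Function.iterate_add_apply,
    Nat.sub_add_cancel hk]

end Cascade

namespace MaxCapacity

variable (n : ℕ) (ε M : ℝ)

def load (i : Fin (2 * n + 1)) : ℝ := if (i : ℕ) < n then ε else M - 2 * ε

def freeSpace (i : Fin (2 * n + 1)) : ℝ := if (i : ℕ) < n then M - ε else ε

def maxCapacitySet : Finset (Fin (2 * n + 1)) := univ.filter fun i => (i : ℕ) < n

variable {n ε M}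

theorem load_of_lt {i : Fin (2 * n + 1)} (hi : (i : ℕ) < n) : load n ε M i = ε := if_pos hi

theorem load_of_le {i : Fin (2 * n + 1)} (hi : n ≤ (i : ℕ)) : load n ε M i = M - 2 * ε :=
  if_neg (not_lt.2 hi)

theorem freeSpace_of_lt {i : Fin (2 * n + 1)} (hi : (i : ℕ) < n) : freeSpace n ε M i = M - ε :=
  if_pos hi

theorem freeSpace_of_le {i : Fin (2 * n + 1)} (hi : n ≤ (i : ℕ)) : freeSpace n ε M i = ε :=
  if_neg (not_lt.2 hi)

theorem mem_maxCapacitySet {i : Fin (2 * n + 1)} : i ∈ maxCapacitySet n ↔ (i : ℕ) < n := by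
  simp [maxCapacitySet]

theorem mem_compl_maxCapacitySet {i : Fin (2 * n + 1)} :
    i ∈ (maxCapacitySet n)ᶜ ↔ n ≤ (i : ℕ) := by
  rw [mem_compl, mem_maxCapacitySet, not_lt]

variable (n ε M)

theorem card_maxCapacitySet : #(maxCapacitySet n) = n := by
  have : maxCapacitySet n = Iio ⟨n, by omega⟩ := by
    ext i
    simp [mem_maxCapacitySet, Fin.lt_def]
  rw [this, Fin.card_Iio]

theorem card_compl_maxCapacitySet : #(maxCapacitySet n)ᶜ = n + 1 := by
  rw [card_compl, Fintype.card_fin, card_maxCapacitySet]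
  omega

theorem sum_load_maxCapacitySet : ∑ j ∈ maxCapacitySet n, load n ε M j = n * ε := by
  rw [sum_congr rfl fun j hj => load_of_lt (mem_maxCapacitySet.1 hj), sum_const,
    card_maxCapacitySet, nsmul_eq_mul]

theorem sum_load_compl_maxCapacitySet :
    ∑ j ∈ (maxCapacitySet n)ᶜ, load n ε M j = (n + 1) * (M - 2 * ε) := by
  rw [sum_congr rfl fun j hj => load_of_le (mem_compl_maxCapacitySet.1 hj), sum_const,
    card_compl_maxCapacitySet, nsmul_eq_mul]
  push_cast
  ring

theorem extraLoad_maxCapacitySet :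
    extraLoad (load n ε M) (maxCapacitySet n) = n * ε / (n + 1) := by
  rw [extraLoad, sum_load_maxCapacitySet, card_maxCapacitySet]
  push_cast
  ring

theorem extraLoad_compl_maxCapacitySet :
    extraLoad (load n ε M) (maxCapacitySet n)ᶜ = (n + 1) * (M - 2 * ε) / n := by
  rw [extraLoad, sum_load_compl_maxCapacitySet, card_compl_maxCapacitySet]
  push_cast
  ring

theorem extraLoad_singleton {a : Fin (2 * n + 1)} (ha : n ≤ (a : ℕ)) :
    extraLoad (load n ε M) {a} = (M - 2 * ε) / (2 * n) := by
  rw [extraLoad, sum_singleton, load_of_le ha, card_singleton]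
  push_cast
  ring

variable {n ε M}

theorem step_singleton (hn : 1 ≤ n) (hε : 0 < ε) (hM : 2 * ((n : ℝ) + 1) * ε < M)
    {a : Fin (2 * n + 1)} (ha : n ≤ (a : ℕ)) :
    step (load n ε M) (freeSpace n ε M) {a} = (maxCapacitySet n)ᶜ := by
  have hn' : (1 : ℝ) ≤ n := by exact_mod_cast hn
  ext i
  rw [mem_step, extraLoad_singleton n ε M ha, mem_singleton, mem_compl_maxCapacitySet]
  rcases lt_or_ge (i : ℕ) n with hi | hi
  · have hsafe : (M - 2 * ε) / (2 * n) < M - ε := by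
      rw [div_lt_iff₀ (by positivity)]
      nlinarith [mul_pos (by positivity : (0 : ℝ) < n) hε]
    rw [freeSpace_of_lt hi]
    simp only [not_le.2 hi, iff_false, not_or]
    exact ⟨by rintro rfl; omega, hsafe.not_ge⟩
  · have hfail : ε ≤ (M - 2 * ε) / (2 * n) := by
      rw [le_div_iff₀ (by positivity)]
      linarith
    rw [freeSpace_of_le hi]
    simp only [hi, iff_true]
    exact Or.inr hfail

theorem step_compl_maxCapacitySet (hn : 1 ≤ n) (hε : 0 < ε)
    (hM : 2 * ((n : ℝ) + 1) * ε < M) :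
    step (load n ε M) (freeSpace n ε M) (maxCapacitySet n)ᶜ = univ := by
  have hn' : (1 : ℝ) ≤ n := by exact_mod_cast hn
  refine eq_univ_of_forall fun i => mem_step.2 ?_
  rw [mem_compl_maxCapacitySet, extraLoad_compl_maxCapacitySet]
  rcases lt_or_ge (i : ℕ) n with hi | hi
  · refine Or.inr ?_
    rw [freeSpace_of_lt hi, le_div_iff₀ (by positivity)]
    nlinarith [mul_pos (by positivity : (0 : ℝ) < n) hε]
  · exact Or.inl hi

theorem step_maxCapacitySet (hε : 0 < ε) (hM : 2 * ((n : ℝ) + 1) * ε < M) :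
    step (load n ε M) (freeSpace n ε M) (maxCapacitySet n) = maxCapacitySet n := by
  have hε_le : ∀ i, ε ≤ freeSpace n ε M i := by
    intro i
    rcases lt_or_ge (i : ℕ) n with hi | hi
    · rw [freeSpace_of_lt hi]
      nlinarith [mul_nonneg n.cast_nonneg hε.le]
    · rw [freeSpace_of_le hi]
  have hsafe : ∀ i, n * ε / (n + 1) < freeSpace n ε M i := fun i =>
    lt_of_lt_of_le ((div_lt_iff₀ (by positivity)).2 (by linarith)) (hε_le i)
  ext i
  rw [mem_step, extraLoad_maxCapacitySet]
  exact or_iff_left (hsafe i).not_ge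

end MaxCapacity

/-- The max-capacity counterexample: among `2n+1` containers, `n` of type `(ε, M)`
(free space `M-ε`) and `n+1` of type `(M-2ε, M-ε)` (free space `ε`), with
`M > 2(n+1)ε`: attacking any single container of the second type fails everything,
while attacking all `n` first-type (max-capacity) containers triggers no further
failures. -/
theorem max_capacity_counterexample (n : ℕ) (hn : 1 ≤ n) (ε M : ℝ)
    (hε : 0 < ε) (hM : 2 * ((n : ℝ) + 1) * ε < M) :
    (∀ a : Fin (2 * n + 1), n ≤ (a : ℕ) →
      cascade (fun i : Fin (2 * n + 1) => if (i : ℕ) < n then ε else M - 2 * ε)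
        (fun i : Fin (2 * n + 1) => if (i : ℕ) < n then M - ε else ε) {a} = Finset.univ) ∧
    (cascade (fun i : Fin (2 * n + 1) => if (i : ℕ) < n then ε else M - 2 * ε)
        (fun i : Fin (2 * n + 1) => if (i : ℕ) < n then M - ε else ε)
        (Finset.univ.filter (fun i : Fin (2 * n + 1) => (i : ℕ) < n))
      = Finset.univ.filter (fun i : Fin (2 * n + 1) => (i : ℕ) < n)) := by
  open MaxCapacity in
  refine ⟨fun a ha => ?_, ?_⟩
  · change cascade (load n ε M) (freeSpace n ε M) {a} = univ
    have hreach : (step (load n ε M) (freeSpace n ε M))^[2] {a} = univ := by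
      rw [Function.iterate_succ_apply, Function.iterate_one, step_singleton hn hε hM ha,
        step_compl_maxCapacitySet hn hε hM]
    rw [cascade_eq_of_step_iterate_fixed (k := 2) (by omega) (by rw [hreach, step_univ]), hreach]
  · change cascade (load n ε M) (freeSpace n ε M) (maxCapacitySet n) = maxCapacitySet n
    exact cascade_eq_of_step_iterate_fixed (k := 0) (Nat.zero_le _) (step_maxCapacitySet hε hM)
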